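/- Every interassociate of the semigroup LO_X^{+0} (a left zero semigroup with an adjoined zero) is of the form LO^{~0}_{A←X} for some A ⊆ X: if (X⁰, ⊢) is an interassociate of (X⁰, ⊣) where x ⊣ y = x for x, y ∈ X and 0 acts as zero, then there exists A ⊆ X such that x ⊢ y = x if y ∈ A and x ⊢ y = 0 otherwise. -/

import Mathlib

/-!
Interassociativity at `0` makes `0` a zero of `⊢`. For `a, b, c ∈ X` the law
`(a ⊣ b) ⊢ c = a ⊣ (b ⊢ c)` reads `a ⊢ c = a ⊣ (b ⊢ c)`: so `a ⊢ c` is either `a` or `0`,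
and which of the two does not depend on `a`. Then `A` is the set of `c` with `b ⊢ c ≠ 0`
for some `b`.
-/

open scoped Classical

namespace LeftZeroWithZero

variable {X : Type*}

/-- The product of `LO_X^{+0}`, with `none` as the adjoined zero. -/
def mul : Option X → Option X → Option X
  | some a, some _ => some a
  | some _, none => none
  | none, _ => none

theorem mul_none (x : Option X) : mul x none = none := by
  cases x <;> rfl

variable {h : Option X → Option X → Option X}

theorem zero_mul_of_interassoc (inter : ∀ x y z, h (mul x y) z = mul x (h y z))
    (z : Option X) : h none z = none :=
  inter none none z

theorem mul_zero_of_interassoc (inter : ∀ x y z, mul (h x y) z = h x (mul y z))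
    (x : Option X) : h x none = none :=
  calc h x none = h x (mul none none) := rfl
    _ = mul (h x none) none := (inter x none none).symm
    _ = none := mul_none _

theorem some_mul_some_of_interassoc (inter : ∀ x y z, h (mul x y) z = mul x (h y z))
    (a b c : X) : h (some a) (some c) = if h (some b) (some c) = none then none else some a := by
  rw [← show mul (some a) (some b) = some a from rfl, inter]
  cases h (some b) (some c) <;> rfl

end LeftZeroWithZero

open LeftZeroWithZero in
theorem interassociate_of_LO_plus_zero {X : Type*}
    (h : Option X → Option X → Option X)
    (inter1 : ∀ x y z : Option X,
      h ((fun p q => match p, q with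
            | some a, some _ => some a
            | _, _ => none) x y) z
        = (fun p q => match p, q with
            | some a, some _ => some a
            | _, _ => none) x (h y z))
    (inter2 : ∀ x y z : Option X,
      (fun p q => match p, q with
          | some a, some _ => some a
          | _, _ => none) (h x y) z
        = h x ((fun p q => match p, q with
            | some a, some _ => some a
            | _, _ => none) y z)) :
    ∃ A : Set X, ∀ x y : Option X,
      h x y = y.elim none (fun b => if b ∈ A then x else none) := by
  have hmul : (fun p q => match p, q with
      | some a, some _ => some a
      | _, _ => none) = mul (X := X) := by
    funext p q
    cases p <;> cases q <;> rfl
  rw [hmul] at inter1 inter2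
  refine ⟨{c | ∃ b, h (some b) (some c) ≠ none}, fun x y => ?_⟩
  rcases y with _ | c
  · exact mul_zero_of_interassoc inter2 x
  rcases x with _ | a
  · simpa using zero_mul_of_interassoc inter1 (some c)
  by_cases hc : ∃ b, h (some b) (some c) ≠ none
  · obtain ⟨b, hb⟩ := id hc
    simp [some_mul_some_of_interassoc inter1 a b c, hb, hc]
  · push Not at hc
    simp [hc]
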